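/- arXiv:1603.09377 — 5 statements merged into one kernel-verified Lean document; each statement's English description precedes it below -/
import Mathlib

section
/- On the six-dimensional real Lie algebra of vector fields on ℝ³ (coordinates t, x, u) spanned by P^t = ∂_t, P^x = ∂_x, D^t = t∂_t − u∂_u, D^x = x∂_x + u∂_u, G = t∂_x + ∂_u, Π = t²∂_t + tx∂_x + (x − tu)∂_u, the nonzero Lie bracket relations are: [P^t,D^t] = P^t, [D^t,Π] = Π, [P^t,Π] = 2D^t + D^x, [P^x,D^x] = P^x, [P^x,Π] = G, [P^t,G] = P^x, [D^t,G] = G, [G,D^x] = G, and all other brackets of distinct basis elements vanish. -/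
noncomputable def br (V W : ℝ × ℝ × ℝ → ℝ × ℝ × ℝ) : ℝ × ℝ × ℝ → ℝ × ℝ × ℝ :=
  fun p => fderiv ℝ W p (V p) - fderiv ℝ V p (W p)

noncomputable def Pt : ℝ × ℝ × ℝ → ℝ × ℝ × ℝ := fun _ => (1, 0, 0)
noncomputable def Px : ℝ × ℝ × ℝ → ℝ × ℝ × ℝ := fun _ => (0, 1, 0)
noncomputable def Dt : ℝ × ℝ × ℝ → ℝ × ℝ × ℝ := fun p => (p.1, 0, -p.2.2)
noncomputable def Dx : ℝ × ℝ × ℝ → ℝ × ℝ × ℝ := fun p => (0, p.2.1, p.2.2)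
noncomputable def Gv : ℝ × ℝ × ℝ → ℝ × ℝ × ℝ := fun p => (0, p.1, 1)
noncomputable def Pi' : ℝ × ℝ × ℝ → ℝ × ℝ × ℝ :=
  fun p => (p.1 ^ 2, p.1 * p.2.1, p.2.1 - p.1 * p.2.2)

attribute [local simp] DifferentiableAt.fderiv_prodMk fderiv.fst fderiv.snd
  fderiv_fun_mul fderiv_fun_pow fderiv_fun_sub

lemma fderiv_Pt (p v : ℝ × ℝ × ℝ) : fderiv ℝ Pt p v = 0 := by
  unfold Pt
  simp

lemma fderiv_Px (p v : ℝ × ℝ × ℝ) : fderiv ℝ Px p v = 0 := by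
  unfold Px
  simp

lemma fderiv_Dt (p v : ℝ × ℝ × ℝ) : fderiv ℝ Dt p v = (v.1, 0, -v.2.2) := by
  unfold Dt
  simp (disch := fun_prop)

lemma fderiv_Dx (p v : ℝ × ℝ × ℝ) : fderiv ℝ Dx p v = (0, v.2.1, v.2.2) := by
  unfold Dx
  simp (disch := fun_prop)

lemma fderiv_Gv (p v : ℝ × ℝ × ℝ) : fderiv ℝ Gv p v = (0, v.1, 0) := by
  unfold Gv
  simp (disch := fun_prop)

lemma fderiv_Pi' (p v : ℝ × ℝ × ℝ) :
    fderiv ℝ Pi' p v =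
      (2 * p.1 * v.1, p.1 * v.2.1 + p.2.1 * v.1, v.2.1 - (p.1 * v.2.2 + p.2.2 * v.1)) := by
  unfold Pi'
  simp (disch := fun_prop)

theorem commutation_relations :
    br Pt Dt = Pt ∧
    br Dt Pi' = Pi' ∧
    br Pt Pi' = (fun p => (2 : ℝ) • Dt p + Dx p) ∧
    br Px Dx = Px ∧
    br Px Pi' = Gv ∧
    br Pt Gv = Px ∧
    br Dt Gv = Gv ∧
    br Gv Dx = Gv ∧
    br Pt Px = 0 ∧
    br Pt Dx = 0 ∧
    br Px Dt = 0 ∧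
    br Px Gv = 0 ∧
    br Dt Dx = 0 ∧
    br Dx Pi' = 0 ∧
    br Gv Pi' = 0 := by
  refine ⟨?_, ?_, ?_, ?_, ?_, ?_, ?_, ?_, ?_, ?_, ?_, ?_, ?_, ?_, ?_⟩ <;>
  · funext p
    simp only [br, fderiv_Pt, fderiv_Px, fderiv_Dt, fderiv_Dx, fderiv_Gv, fderiv_Pi']
    ext <;> simp [Pt, Px, Dt, Dx, Gv, Pi'] <;> ring
end

section
/- Let h be a smooth real function and let θ : ℝ × ℝ → ℝ be smooth with θ_x never zero and satisfying θ_t = θ_xx/θ_x + h(θ)·θ_x. Define f := −1/θ_x and ξ := −θ_t/θ_x. Then f and ξ satisfy the system f_t + ξ·f_x − ξ_x·f = 0 and ξ_t + ξ·ξ_x + f·ξ_xx = 0. -/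
noncomputable def dT (u : ℝ × ℝ → ℝ) : ℝ × ℝ → ℝ := fun p => fderiv ℝ u p (1, 0)
noncomputable def dX (u : ℝ × ℝ → ℝ) : ℝ × ℝ → ℝ := fun p => fderiv ℝ u p (0, 1)

lemma hasDerivAt_dT (u : ℝ × ℝ → ℝ) (hu : Differentiable ℝ u) (t x : ℝ) :
    HasDerivAt (fun s => u (s, x)) (dT u (t, x)) t := by
  have h1 : HasDerivAt (fun s : ℝ => (s, x)) ((1 : ℝ), (0 : ℝ)) t :=
    (hasDerivAt_id t).prodMk (hasDerivAt_const t x)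
  exact (hu (t, x)).hasFDerivAt.comp_hasDerivAt t h1

lemma hasDerivAt_dX (u : ℝ × ℝ → ℝ) (hu : Differentiable ℝ u) (t x : ℝ) :
    HasDerivAt (fun y => u (t, y)) (dX u (t, x)) x := by
  have h1 : HasDerivAt (fun y : ℝ => (t, y)) ((0 : ℝ), (1 : ℝ)) x :=
    (hasDerivAt_const x t).prodMk (hasDerivAt_id x)
  exact (hu (t, x)).hasFDerivAt.comp_hasDerivAt x h1

lemma contDiff_dT {u : ℝ × ℝ → ℝ} (hu : ContDiff ℝ (⊤ : ℕ∞) u) : ContDiff ℝ (⊤ : ℕ∞) (dT u) :=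
  (hu.fderiv_right (by simp)).clm_apply contDiff_const

lemma contDiff_dX {u : ℝ × ℝ → ℝ} (hu : ContDiff ℝ (⊤ : ℕ∞) u) : ContDiff ℝ (⊤ : ℕ∞) (dX u) :=
  (hu.fderiv_right (by simp)).clm_apply contDiff_const

lemma fderiv_fderiv_apply' (u : ℝ × ℝ → ℝ) (hu : ContDiff ℝ (⊤ : ℕ∞) u) (q v w : ℝ × ℝ) :
    fderiv ℝ (fun p => fderiv ℝ u p v) q w = fderiv ℝ (fderiv ℝ u) q w v := by
  have hF : DifferentiableAt ℝ (fderiv ℝ u) q :=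
    ((hu.fderiv_right (m := (⊤ : ℕ∞)) (by simp)).differentiable (by simp)) q
  have := ((ContinuousLinearMap.apply ℝ ℝ v).hasFDerivAt.comp q hF.hasFDerivAt).fderiv
  calc fderiv ℝ (fun p => fderiv ℝ u p v) q w
      = (fderiv ℝ ((ContinuousLinearMap.apply ℝ ℝ v) ∘ (fderiv ℝ u)) q) w := rfl
    _ = fderiv ℝ (fderiv ℝ u) q w v := by rw [this]; rfl

lemma fderiv_symm' (u : ℝ × ℝ → ℝ) (hu : ContDiff ℝ (⊤ : ℕ∞) u) (q v w : ℝ × ℝ) :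
    fderiv ℝ (fun p => fderiv ℝ u p v) q w = fderiv ℝ (fun p => fderiv ℝ u p w) q v := by
  rw [fderiv_fderiv_apply' u hu, fderiv_fderiv_apply' u hu]
  have hder : ∀ y, HasFDerivAt u (fderiv ℝ u y) y :=
    fun y => ((hu.differentiable (by simp)) y).hasFDerivAt
  have hsecond : HasFDerivAt (fderiv ℝ u) (fderiv ℝ (fderiv ℝ u) q) q :=
    (((hu.fderiv_right (m := (⊤ : ℕ∞)) (by simp)).differentiable (by simp)) q).hasFDerivAt
  exact second_derivative_symmetric hder hsecond w v

lemma dTX_comm {u : ℝ × ℝ → ℝ} (hu : ContDiff ℝ (⊤ : ℕ∞) u) (p : ℝ × ℝ) :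
    dT (dX u) p = dX (dT u) p :=
  fderiv_symm' u hu p (0, 1) (1, 0)

noncomputable def pt (u : ℝ × ℝ → ℝ) (t x : ℝ) : ℝ := deriv (fun s => u (s, x)) t
noncomputable def px (u : ℝ × ℝ → ℝ) (t x : ℝ) : ℝ := deriv (fun y => u (t, y)) x
noncomputable def pxx (u : ℝ × ℝ → ℝ) (t x : ℝ) : ℝ := deriv (fun y => px u t y) x

theorem potential_generates_reduction_system (h : ℝ → ℝ) (hh : ContDiff ℝ (⊤ : ℕ∞) h)
    (θ : ℝ × ℝ → ℝ) (hθ : ContDiff ℝ (⊤ : ℕ∞) θ) (hθx : ∀ t x : ℝ, px θ t x ≠ 0)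
    (hpde : ∀ t x : ℝ, pt θ t x = pxx θ t x / px θ t x + h (θ (t, x)) * px θ t x) :
    (∀ t x : ℝ,
      pt (fun p => -1 / px θ p.1 p.2) t x
        + (-pt θ t x / px θ t x) * px (fun p => -1 / px θ p.1 p.2) t x
        - px (fun p => -pt θ p.1 p.2 / px θ p.1 p.2) t x * (-1 / px θ t x) = 0) ∧
    (∀ t x : ℝ,
      pt (fun p => -pt θ p.1 p.2 / px θ p.1 p.2) t x
        + (-pt θ t x / px θ t x) * px (fun p => -pt θ p.1 p.2 / px θ p.1 p.2) t x
        + (-1 / px θ t x) * pxx (fun p => -pt θ p.1 p.2 / px θ p.1 p.2) t x = 0) := by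
  have hdθ : Differentiable ℝ θ := hθ.differentiable (by simp)
  have hA : ContDiff ℝ (⊤ : ℕ∞) (dT θ) := contDiff_dT hθ
  have hB : ContDiff ℝ (⊤ : ℕ∞) (dX θ) := contDiff_dX hθ
  have hdA : Differentiable ℝ (dT θ) := hA.differentiable (by simp)
  have hdB : Differentiable ℝ (dX θ) := hB.differentiable (by simp)
  have hdAx : Differentiable ℝ (dX (dT θ)) := (contDiff_dX hA).differentiable (by simp)
  have hdBx : Differentiable ℝ (dX (dX θ)) := (contDiff_dX hB).differentiable (by simp)
  have hpt : ∀ (u : ℝ × ℝ → ℝ), Differentiable ℝ u → ∀ t x : ℝ, pt u t x = dT u (t, x) :=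
    fun u hu t x => (hasDerivAt_dT u hu t x).deriv
  have hpx : ∀ (u : ℝ × ℝ → ℝ), Differentiable ℝ u → ∀ t x : ℝ, px u t x = dX u (t, x) :=
    fun u hu t x => (hasDerivAt_dX u hu t x).deriv
  have hBne : ∀ p : ℝ × ℝ, dX θ p ≠ 0 := fun p => by
    have := hθx p.1 p.2
    rwa [hpx θ hdθ] at this
  have hpxxθ : ∀ t x : ℝ, pxx θ t x = dX (dX θ) (t, x) := by
    intro t x
    have h1 : (fun y => px θ t y) = fun y => dX θ (t, y) := funext fun y => hpx θ hdθ t y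
    show deriv (fun y => px θ t y) x = _
    rw [h1]
    exact (hasDerivAt_dX (dX θ) hdB t x).deriv
  have hpde' : ∀ p : ℝ × ℝ, dT θ p = dX (dX θ) p / dX θ p + h (θ p) * dX θ p := by
    intro p
    have := hpde p.1 p.2
    rwa [hpt θ hdθ, hpx θ hdθ, hpxxθ] at this
  have e1 : (fun p : ℝ × ℝ => -1 / px θ p.1 p.2) = fun p => -1 / dX θ p :=
    funext fun p => by rw [hpx θ hdθ]
  have e2 : (fun p : ℝ × ℝ => -pt θ p.1 p.2 / px θ p.1 p.2) = fun p => -dT θ p / dX θ p :=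
    funext fun p => by rw [hpt θ hdθ, hpx θ hdθ]
  -- derivative of ξ in x, at every point
  have hQ : ∀ t y : ℝ, HasDerivAt (fun z => -dT θ (t, z) / dX θ (t, z))
      ((-(dX (dT θ) (t, y)) * dX θ (t, y) - -dT θ (t, y) * dX (dX θ) (t, y)) / dX θ (t, y) ^ 2)
      y :=
    fun t y => ((hasDerivAt_dX (dT θ) hdA t y).neg).div (hasDerivAt_dX (dX θ) hdB t y)
      (hBne (t, y))
  constructor
  · intro t x
    have hb := hBne (t, x)
    have g1 : HasDerivAt (fun s => -1 / dX θ (s, x))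
        (((0 : ℝ) * dX θ (t, x) - -1 * dT (dX θ) (t, x)) / dX θ (t, x) ^ 2) t :=
      (hasDerivAt_const t (-1 : ℝ)).div (hasDerivAt_dT (dX θ) hdB t x) hb
    have g2 : HasDerivAt (fun y => -1 / dX θ (t, y))
        (((0 : ℝ) * dX θ (t, x) - -1 * dX (dX θ) (t, x)) / dX θ (t, x) ^ 2) x :=
      (hasDerivAt_const x (-1 : ℝ)).div (hasDerivAt_dX (dX θ) hdB t x) hb
    have r1 : dT (dX θ) (t, x) = dX (dT θ) (t, x) := dTX_comm hθ (t, x)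
    rw [e1, e2, hpt θ hdθ, hpx θ hdθ]
    simp only [pt, px]
    rw [g1.deriv, g2.deriv, (hQ t x).deriv, r1]
    field_simp
    ring
  · intro t x
    have hb := hBne (t, x)
    -- pt ξ
    have g3 : HasDerivAt (fun s => -dT θ (s, x) / dX θ (s, x))
        ((-(dT (dT θ) (t, x)) * dX θ (t, x) - -dT θ (t, x) * dT (dX θ) (t, x))
          / dX θ (t, x) ^ 2) t :=
      ((hasDerivAt_dT (dT θ) hdA t x).neg).div (hasDerivAt_dT (dX θ) hdB t x) hb
    -- pxx ξ : rewrite the inner function, then differentiate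
    have hfun2 : deriv (fun z : ℝ => -dT θ (t, z) / dX θ (t, z))
        = fun y => (-(dX (dT θ) (t, y)) * dX θ (t, y) - -dT θ (t, y) * dX (dX θ) (t, y))
            / (dX θ (t, y) * dX θ (t, y)) :=
      funext fun y => by rw [(hQ t y).deriv, pow_two]
    have hNum : HasDerivAt
        (fun y => -(dX (dT θ) (t, y)) * dX θ (t, y) - -dT θ (t, y) * dX (dX θ) (t, y))
        ((-(dX (dX (dT θ)) (t, x)) * dX θ (t, x) + -(dX (dT θ) (t, x)) * dX (dX θ) (t, x))
          - (-(dX (dT θ) (t, x)) * dX (dX θ) (t, x) + -dT θ (t, x) * dX (dX (dX θ)) (t, x)))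
        x :=
      ((hasDerivAt_dX (dX (dT θ)) hdAx t x).neg.mul (hasDerivAt_dX (dX θ) hdB t x)).sub
        ((hasDerivAt_dX (dT θ) hdA t x).neg.mul (hasDerivAt_dX (dX (dX θ)) hdBx t x))
    have hDen : HasDerivAt (fun y => dX θ (t, y) * dX θ (t, y))
        (dX (dX θ) (t, x) * dX θ (t, x) + dX θ (t, x) * dX (dX θ) (t, x)) x :=
      (hasDerivAt_dX (dX θ) hdB t x).mul (hasDerivAt_dX (dX θ) hdB t x)
    have hBig : HasDerivAt (fun y => (-(dX (dT θ) (t, y)) * dX θ (t, y) - -dT θ (t, y) * dX (dX θ) (t, y))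
        / (dX θ (t, y) * dX θ (t, y))) _ x := hNum.div hDen (mul_ne_zero hb hb)
    -- relations from the PDE and symmetry of mixed partials
    have r1 : dT (dX θ) (t, x) = dX (dT θ) (t, x) := dTX_comm hθ (t, x)
    have r2s : dT θ (t, x) = dX (dX θ) (t, x) / dX θ (t, x) + h (θ (t, x)) * dX θ (t, x) :=
      hpde' (t, x)
    have r3s : dT (dX (dX θ)) (t, x) = dX (dX (dT θ)) (t, x) := by
      have s1 : dT (dX (dX θ)) (t, x) = dX (dT (dX θ)) (t, x) := dTX_comm hB (t, x)
      have s2 : dT (dX θ) = dX (dT θ) := funext fun p => dTX_comm hθ p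
      rw [s1, s2]
    have hcompx : HasDerivAt (fun y => h (θ (t, y))) (deriv h (θ (t, x)) * dX θ (t, x)) x := by
      have h1 : HasDerivAt h (deriv h (θ (t, x))) (θ (t, x)) :=
        ((hh.differentiable (by simp)) (θ (t, x))).hasDerivAt
      exact h1.comp x (hasDerivAt_dX θ hdθ t x)
    have hcompt : HasDerivAt (fun s => h (θ (s, x))) (deriv h (θ (t, x)) * dT θ (t, x)) t := by
      have h1 : HasDerivAt h (deriv h (θ (t, x))) (θ (t, x)) :=
        ((hh.differentiable (by simp)) (θ (t, x))).hasDerivAt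
      exact h1.comp t (hasDerivAt_dT θ hdθ t x)
    have r4' : HasDerivAt
        (fun y => dX (dX θ) (t, y) / dX θ (t, y) + h (θ (t, y)) * dX θ (t, y))
        ((dX (dX (dX θ)) (t, x) * dX θ (t, x) - dX (dX θ) (t, x) * dX (dX θ) (t, x))
            / dX θ (t, x) ^ 2
          + (deriv h (θ (t, x)) * dX θ (t, x) * dX θ (t, x)
            + h (θ (t, x)) * dX (dX θ) (t, x))) x :=
      ((hasDerivAt_dX (dX (dX θ)) hdBx t x).div (hasDerivAt_dX (dX θ) hdB t x) hb).add
        (hcompx.mul (hasDerivAt_dX (dX θ) hdB t x))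
    have r4s : dX (dT θ) (t, x)
        = (dX (dX (dX θ)) (t, x) * dX θ (t, x) - dX (dX θ) (t, x) * dX (dX θ) (t, x))
            / dX θ (t, x) ^ 2
          + (deriv h (θ (t, x)) * dX θ (t, x) * dX θ (t, x)
            + h (θ (t, x)) * dX (dX θ) (t, x)) := by
      have d1 : deriv (fun y => dT θ (t, y)) x = dX (dT θ) (t, x) :=
        (hasDerivAt_dX (dT θ) hdA t x).deriv
      have hfunx : (fun y => dT θ (t, y))
          = fun y => dX (dX θ) (t, y) / dX θ (t, y) + h (θ (t, y)) * dX θ (t, y) :=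
        funext fun y => hpde' (t, y)
      rw [hfunx] at d1
      rw [← d1]
      exact r4'.deriv
    have r5' : HasDerivAt
        (fun s => dX (dX θ) (s, x) / dX θ (s, x) + h (θ (s, x)) * dX θ (s, x))
        ((dT (dX (dX θ)) (t, x) * dX θ (t, x) - dX (dX θ) (t, x) * dT (dX θ) (t, x))
            / dX θ (t, x) ^ 2
          + (deriv h (θ (t, x)) * dT θ (t, x) * dX θ (t, x)
            + h (θ (t, x)) * dT (dX θ) (t, x))) t :=
      ((hasDerivAt_dT (dX (dX θ)) hdBx t x).div (hasDerivAt_dT (dX θ) hdB t x) hb).add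
        (hcompt.mul (hasDerivAt_dT (dX θ) hdB t x))
    have r5s : dT (dT θ) (t, x)
        = (dT (dX (dX θ)) (t, x) * dX θ (t, x) - dX (dX θ) (t, x) * dT (dX θ) (t, x))
            / dX θ (t, x) ^ 2
          + (deriv h (θ (t, x)) * dT θ (t, x) * dX θ (t, x)
            + h (θ (t, x)) * dT (dX θ) (t, x)) := by
      have d1 : deriv (fun s => dT θ (s, x)) t = dT (dT θ) (t, x) :=
        (hasDerivAt_dT (dT θ) hdA t x).deriv
      have hfunt : (fun s => dT θ (s, x))
          = fun s => dX (dX θ) (s, x) / dX θ (s, x) + h (θ (s, x)) * dX θ (s, x) :=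
        funext fun s => hpde' (s, x)
      rw [hfunt] at d1
      rw [← d1]
      exact r5'.deriv
    rw [e2, hpt θ hdθ, hpx θ hdθ]
    simp only [pt, px, pxx]
    rw [g3.deriv, (hQ t x).deriv, hfun2, hBig.deriv]
    rw [r5s, r3s, r1, r4s, r2s]
    field_simp
    ring
end

section
/- Let f : ℝ × ℝ → ℝ be smooth and let λ : ℝ → ℝ be continuous and satisfy λ'(t) = f_xx(t,x)·λ(t) for all (t,x) ∈ ℝ². If f_xxx(t₀,x₀) ≠ 0 for some point (t₀,x₀), then λ ≡ 0. -/
theorem characteristic_vanishes (f : ℝ × ℝ → ℝ) (hf : ContDiff ℝ (⊤ : ℕ∞) f)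
    (lam : ℝ → ℝ) (hlamc : Continuous lam)
    (hlam : ∀ t x : ℝ, HasDerivAt lam (pxx f t x * lam t) t)
    (t₀ x₀ : ℝ) (hfxxx : deriv (fun y => pxx f t₀ y) x₀ ≠ 0) :
    ∀ t : ℝ, lam t = 0 := by
  -- F1 p = ∂f/∂x at p
  set F1 : ℝ × ℝ → ℝ := fun p => fderiv ℝ f p (0, 1) with hF1
  have hF1smooth : ContDiff ℝ (⊤ : ℕ∞) F1 :=
    (hf.fderiv_right (by simp)).clm_apply contDiff_const
  have hline : ∀ t x : ℝ, HasDerivAt (fun y => ((t, y) : ℝ × ℝ)) ((0 : ℝ), (1 : ℝ)) x :=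
    fun t x => (hasDerivAt_const x t).prodMk (hasDerivAt_id x)
  have hpx : ∀ t x : ℝ, px f t x = F1 (t, x) := by
    intro t x
    exact (((hf.differentiable (by simp)) (t, x)).hasFDerivAt.comp_hasDerivAt x (hline t x)).deriv
  set F2 : ℝ × ℝ → ℝ := fun p => fderiv ℝ F1 p (0, 1) with hF2
  have hF2smooth : ContDiff ℝ (⊤ : ℕ∞) F2 :=
    (hF1smooth.fderiv_right (by simp)).clm_apply contDiff_const
  have hpxx : ∀ t x : ℝ, pxx f t x = F2 (t, x) := by
    intro t x
    have : (fun y => px f t y) = fun y => F1 (t, y) := funext fun y => hpx t y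
    rw [pxx, this]
    exact (((hF1smooth.differentiable (by simp)) (t, x)).hasFDerivAt.comp_hasDerivAt x
      (hline t x)).deriv
  -- Step 1: lam t₀ = 0
  have hlam0 : lam t₀ = 0 := by
    by_contra h
    have hconst : ∀ x : ℝ, pxx f t₀ x = pxx f t₀ x₀ := by
      intro x
      have h1 := (hlam t₀ x).deriv
      have h2 := (hlam t₀ x₀).deriv
      have := h1.symm.trans h2
      exact mul_right_cancel₀ h this
    have : (fun y => pxx f t₀ y) = fun _ => pxx f t₀ x₀ := funext hconst
    rw [this, deriv_const] at hfxxx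
    exact hfxxx rfl
  -- Step 2: ODE uniqueness via integrating factor
  set g : ℝ → ℝ := fun t => pxx f t x₀ with hg
  have hgcont : Continuous g := by
    have : g = fun t => F2 (t, x₀) := funext fun t => hpxx t x₀
    rw [this]
    exact hF2smooth.continuous.comp (continuous_id.prodMk continuous_const)
  set G : ℝ → ℝ := fun t => ∫ s in t₀..t, g s with hG
  have hGderiv : ∀ t : ℝ, HasDerivAt G (g t) t := by
    intro t
    exact intervalIntegral.integral_hasDerivAt_right (hgcont.intervalIntegrable t₀ t)
      hgcont.aestronglyMeasurable.stronglyMeasurableAtFilter hgcont.continuousAt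
  set h : ℝ → ℝ := fun t => lam t * Real.exp (-G t) with hh
  have hhderiv : ∀ t : ℝ, HasDerivAt h 0 t := by
    intro t
    have hd := (hlam t x₀).mul (((hGderiv t).neg).exp)
    convert hd using 1
    all_goals try rfl
    rw [hg]
    ring
  have hhconst : ∀ t : ℝ, h t = h t₀ := by
    intro t
    exact is_const_of_deriv_eq_zero (fun s => (hhderiv s).differentiableAt)
      (fun s => (hhderiv s).deriv) t t₀
  intro t
  have := hhconst t
  rw [hh] at this
  simp only [hlam0, zero_mul] at this
  have hexp : Real.exp (-G t) ≠ 0 := Real.exp_ne_zero _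
  exact (mul_eq_zero.mp this).resolve_right hexp
end

section
/- Let h₀ ≠ 0, μ ∈ ℝ, and let c be a real root of the quadratic equation 2c² − h₀·c + 4 = 0. Then on the open set where x − t²/2 + μ > 0, the function u(t,x) := c·√(x − t²/2 + μ) + t solves the generalized Burgers equation u_t + u·u_x + f(t,x)·u_xx = 0 with f(t,x) := h₀·(x − t²/2 + μ)^{3/2}. -/
/-! With `s = √(x - t²/2 + μ)` one finds `u_t = 1 - c t / (2 s)`, `u_x = c / (2 s)` and
`u_xx = -c / (4 s³)`, while `f = h₀ s³`. The terms in `t` cancel in `u_t + u u_x`, and the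
equation reduces to `1 + c²/2 - h₀ c / 4 = 0`, i.e. to the quadratic equation for `c`. -/

open Real

lemma rpow_three_halves {a : ℝ} (ha : 0 ≤ a) : a ^ ((3 : ℝ) / 2) = √a ^ 3 := by
  rw [sqrt_eq_rpow, ← rpow_natCast, ← rpow_mul ha]
  norm_num

section SqrtProfile

variable (μ c : ℝ) {t x : ℝ}

lemma pt_sqrt_profile (hA : 0 < x - t ^ 2 / 2 + μ) :
    pt (fun p => c * √(p.2 - p.1 ^ 2 / 2 + μ) + p.1) t x
      = 1 - c * t / (2 * √(x - t ^ 2 / 2 + μ)) := by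
  have hA' : HasDerivAt (fun s : ℝ => x - s ^ 2 / 2 + μ) (-t) t := by
    simpa using (((hasDerivAt_pow 2 t).div_const 2).const_sub x).add_const μ
  refine (((hA'.sqrt hA.ne').const_mul c).add (hasDerivAt_id t)).deriv.trans ?_
  ring

lemma hasDerivAt_sqrt_profile_x (hA : 0 < x - t ^ 2 / 2 + μ) :
    HasDerivAt (fun y => √(y - t ^ 2 / 2 + μ)) (1 / (2 * √(x - t ^ 2 / 2 + μ))) x :=
  (((hasDerivAt_id x).sub_const _).add_const μ).sqrt hA.ne'

lemma px_sqrt_profile (hA : 0 < x - t ^ 2 / 2 + μ) :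
    px (fun p => c * √(p.2 - p.1 ^ 2 / 2 + μ) + p.1) t x
      = c / (2 * √(x - t ^ 2 / 2 + μ)) := by
  refine (((hasDerivAt_sqrt_profile_x μ hA).const_mul c).add_const t).deriv.trans ?_
  ring

lemma pxx_sqrt_profile (hA : 0 < x - t ^ 2 / 2 + μ) :
    pxx (fun p => c * √(p.2 - p.1 ^ 2 / 2 + μ) + p.1) t x
      = -c / (4 * √(x - t ^ 2 / 2 + μ) ^ 3) := by
  have hpos : ∀ᶠ y in nhds x, 0 < y - t ^ 2 / 2 + μ :=
    (continuous_id.sub continuous_const |>.add continuous_const).continuousAt.eventually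
      (lt_mem_nhds hA)
  have hpx : (fun y => px (fun p => c * √(p.2 - p.1 ^ 2 / 2 + μ) + p.1) t y)
      =ᶠ[nhds x] fun y => c / 2 * (√(y - t ^ 2 / 2 + μ))⁻¹ := by
    filter_upwards [hpos] with y hy
    rw [px_sqrt_profile μ c hy]
    ring
  have hs : √(x - t ^ 2 / 2 + μ) ≠ 0 := (sqrt_pos.2 hA).ne'
  rw [pxx, hpx.deriv_eq]
  refine (((hasDerivAt_sqrt_profile_x μ hA).inv hs).const_mul (c / 2)).deriv.trans ?_
  field_simp
  ring

end SqrtProfile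

theorem sqrt_solution_general (h₀ : ℝ) (μ c : ℝ)
    (hc : 2 * c ^ 2 - h₀ * c + 4 = 0) :
    ∀ t x : ℝ, x - t ^ 2 / 2 + μ > 0 →
      pt (fun p => c * Real.sqrt (p.2 - p.1 ^ 2 / 2 + μ) + p.1) t x
        + (c * Real.sqrt (x - t ^ 2 / 2 + μ) + t)
          * px (fun p => c * Real.sqrt (p.2 - p.1 ^ 2 / 2 + μ) + p.1) t x
        + (h₀ * (x - t ^ 2 / 2 + μ) ^ ((3 : ℝ) / 2))
          * pxx (fun p => c * Real.sqrt (p.2 - p.1 ^ 2 / 2 + μ) + p.1) t x = 0 := by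
  intro t x hA
  rw [pt_sqrt_profile μ c hA, px_sqrt_profile μ c hA, pxx_sqrt_profile μ c hA,
    rpow_three_halves hA.le]
  have hs : √(x - t ^ 2 / 2 + μ) ≠ 0 := (sqrt_pos.2 hA).ne'
  generalize √(x - t ^ 2 / 2 + μ) = s at hs ⊢
  field_simp
  linear_combination 2 * s * hc

theorem sqrt_solution (h₀ : ℝ) (hh₀ : h₀ ≠ 0) (μ c : ℝ)
    (hc : 2 * c ^ 2 - h₀ * c + 4 = 0) :
    ∀ t x : ℝ, x - t ^ 2 / 2 + μ > 0 →
      pt (fun p => c * Real.sqrt (p.2 - p.1 ^ 2 / 2 + μ) + p.1) t x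
        + (c * Real.sqrt (x - t ^ 2 / 2 + μ) + t)
          * px (fun p => c * Real.sqrt (p.2 - p.1 ^ 2 / 2 + μ) + p.1) t x
        + (h₀ * (x - t ^ 2 / 2 + μ) ^ ((3 : ℝ) / 2))
          * pxx (fun p => c * Real.sqrt (p.2 - p.1 ^ 2 / 2 + μ) + p.1) t x = 0 :=
  sqrt_solution_general h₀ μ c hc
end

section
/- Let h₀ ≠ 0 and λ ∈ ℝ. Then the stationary function u(t,x) := −λ·h₀·e^{λx} solves the generalized Burgers equation u_t + u·u_x + f(x)·u_xx = 0 with f(x) := h₀·e^{λx}. -/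
lemma dexp (c lam : ℝ) :
    (deriv fun y : ℝ => c * Real.exp (lam * y)) = fun y => c * lam * Real.exp (lam * y) := by
  funext y
  have h1 : HasDerivAt (fun y : ℝ => lam * y) lam y := by
    simpa using (hasDerivAt_id y).const_mul lam
  have h2 : HasDerivAt (fun y : ℝ => Real.exp (lam * y)) (Real.exp (lam * y) * lam) y :=
    h1.exp
  have h3 := (h2.const_mul c)
  rw [h3.deriv]; ring
  
theorem stationary_exp_solution (h₀ : ℝ) (hh₀ : h₀ ≠ 0) (lam : ℝ) :
    ∀ t x : ℝ,
      pt (fun p => -lam * h₀ * Real.exp (lam * p.2)) t x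
        + (-lam * h₀ * Real.exp (lam * x))
          * px (fun p => -lam * h₀ * Real.exp (lam * p.2)) t x
        + (h₀ * Real.exp (lam * x))
          * pxx (fun p => -lam * h₀ * Real.exp (lam * p.2)) t x = 0 := by
  intro t x
  have hpt : pt (fun p => -lam * h₀ * Real.exp (lam * p.2)) t x = 0 := by
    simp [pt]
  have hpx : ∀ y, px (fun p => -lam * h₀ * Real.exp (lam * p.2)) t y
      = -lam * h₀ * lam * Real.exp (lam * y) := by
    intro y
    simp only [px]
    rw [dexp]
  have hpxx : pxx (fun p => -lam * h₀ * Real.exp (lam * p.2)) t x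
      = -lam * h₀ * lam * lam * Real.exp (lam * x) := by
    simp only [pxx]
    rw [funext (hpx), dexp]
  rw [hpt, hpx, hpxx]
  have := Real.exp_ne_zero (lam * x)
  ring
end
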